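/- For every positive integer a, the range projections S^kV_aV_a*S^{*k}, 0 ≤ k < a, are mutually orthogonal and sum to the identity: (S^jV_aV_a*S^{*j})(S^kV_aV_a*S^{*k}) = 0 for 0 ≤ j < k < a, and ∑_{k=0}^{a−1} S^kV_aV_a*S^{*k} = 1 on ℓ²(ℕ). -/

import Mathlib

open ContinuousLinearMap

section Aux

variable {H : Type*} [NormedAddCommGroup H] [InnerProductSpace ℂ H] [CompleteSpace H]

private lemma vec_ext (e : HilbertBasis ℕ ℂ H) {x y : H}
    (h : ∀ n, inner ℂ (e n) x = (inner ℂ (e n) y : ℂ)) : x = y := by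
  apply e.repr.injective
  ext n
  simpa [e.repr_apply_apply] using h n

private lemma clm_ext (e : HilbertBasis ℕ ℂ H) {T U : H →L[ℂ] H}
    (h : ∀ n, T (e n) = U (e n)) : T = U := by
  refine ContinuousLinearMap.ext_on
    (Submodule.dense_iff_topologicalClosure_eq_top.mpr e.dense_span) ?_
  rintro x ⟨n, rfl⟩
  exact h n

end Aux

/-- On `ℓ²(ℕ)`, with `S` the unilateral shift and `V = V_a` given by
`V e_n = e_{an}` for a positive integer `a`: the range projections `S^k V V* S^{*k}`,
`0 ≤ k < a`, are mutually orthogonal and sum to the identity. -/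
theorem stmt14 {H : Type*} [NormedAddCommGroup H] [InnerProductSpace ℂ H] [CompleteSpace H]
    (e : HilbertBasis ℕ ℂ H) (S : H →L[ℂ] H) (hS : ∀ n, S (e n) = e (n + 1))
    (a : ℕ) (ha : 0 < a) (V : H →L[ℂ] H) (hV : ∀ n, V (e n) = e (a * n)) :
    (∀ j k : ℕ, j < k → k < a →
      (S ^ j * V * adjoint V * (adjoint S) ^ j) * (S ^ k * V * adjoint V * (adjoint S) ^ k)
        = 0) ∧
    (∑ k ∈ Finset.range a, S ^ k * V * adjoint V * (adjoint S) ^ k = 1) := by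
  classical
  have hoe : ∀ i j : ℕ, (inner ℂ (e i) (e j) : ℂ) = if i = j then 1 else 0 :=
    fun i j => orthonormal_iff_ite.mp e.orthonormal i j
  -- powers of S on basis
  have hSk : ∀ k n, (S ^ k) (e n) = e (n + k) := by
    intro k
    induction k with
    | zero => intro n; simp
    | succ k ih =>
      intro n
      have : S ^ (k + 1) = S * S ^ k := by rw [pow_succ']
      rw [this, ContinuousLinearMap.mul_apply, ih, hS, Nat.add_assoc]
  -- adjoint of S on basis
  have hSadj0 : (adjoint S) (e 0) = 0 := by
    apply vec_ext e
    intro m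
    rw [adjoint_inner_right, hS, hoe]
    simp
  have hSadjS : ∀ n, (adjoint S) (e (n + 1)) = e n := by
    intro n
    apply vec_ext e
    intro m
    rw [adjoint_inner_right, hS, hoe, hoe]
    simp
  -- powers of adjoint of S on basis
  have hSadjk : ∀ k n, ((adjoint S) ^ k) (e n) = if k ≤ n then e (n - k) else 0 := by
    intro k
    induction k with
    | zero => intro n; simp
    | succ k ih =>
      intro n
      have hp : (adjoint S) ^ (k + 1) = (adjoint S) ^ k * (adjoint S) := by rw [pow_succ]
      rw [hp, ContinuousLinearMap.mul_apply]
      cases n with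
      | zero => simp [hSadj0]
      | succ n =>
        rw [hSadjS, ih]
        by_cases h : k + 1 ≤ n + 1
        · rw [if_pos (by omega), if_pos h]
          congr 1
          omega
        · rw [if_neg (by omega), if_neg h]
  -- adjoint of V on basis
  have hVadj : ∀ n, (adjoint V) (e n) =
      if a ∣ n then e (n / a) else 0 := by
    intro n
    by_cases h : a ∣ n
    · rw [if_pos h]
      apply vec_ext e
      intro m
      rw [adjoint_inner_right, hV, hoe, hoe]
      have : a * m = n ↔ m = n / a := by
        obtain ⟨c, rfl⟩ := h
        rw [Nat.mul_div_cancel_left c ha]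
        constructor
        · intro h'; exact Nat.eq_of_mul_eq_mul_left ha h'
        · rintro rfl; rfl
      simp [this]
    · rw [if_neg h]
      apply vec_ext e
      intro m
      rw [adjoint_inner_right, hV, hoe]
      have : a * m ≠ n := fun h' => h ⟨m, h'.symm⟩
      simp [this]
  -- the range projections applied to basis vectors
  have hP : ∀ k n, k < a →
      (S ^ k * V * adjoint V * (adjoint S) ^ k) (e n) = if n % a = k then e n else 0 := by
    intro k n hk
    rw [ContinuousLinearMap.mul_apply, hSadjk]
    by_cases hkn : k ≤ n
    · rw [if_pos hkn, ContinuousLinearMap.mul_apply, ContinuousLinearMap.mul_apply, hVadj]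
      by_cases hd : a ∣ (n - k)
      · rw [if_pos hd]
        have heq : n % a = k := by
          obtain ⟨m, hm⟩ := hd
          have hn : n = a * m + k := by omega
          rw [hn, Nat.mul_add_mod, Nat.mod_eq_of_lt hk]
        rw [if_pos heq, hV, Nat.mul_div_cancel' hd, hSk]
        congr 1
        omega
      · rw [if_neg hd]
        have hne : n % a ≠ k := by
          intro h'
          apply hd
          refine ⟨n / a, ?_⟩
          have := Nat.div_add_mod n a
          omega
        rw [if_neg hne]
        simp
    · rw [if_neg hkn]
      have hne : n % a ≠ k := by
        have : n % a = n := Nat.mod_eq_of_lt (by omega)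
        omega
      rw [if_neg hne]
      simp
  constructor
  · intro j k hjk hka
    apply clm_ext e
    intro n
    rw [ContinuousLinearMap.mul_apply, hP k n hka]
    by_cases h : n % a = k
    · rw [if_pos h, hP j n (by omega), if_neg (by omega)]
      simp
    · rw [if_neg h]
      simp
  · apply clm_ext e
    intro n
    rw [ContinuousLinearMap.sum_apply]
    have : ∀ k ∈ Finset.range a,
        (S ^ k * V * adjoint V * (adjoint S) ^ k) (e n) = if n % a = k then e n else 0 :=
      fun k hk => hP k n (Finset.mem_range.mp hk)
    rw [Finset.sum_congr rfl this, Finset.sum_ite_eq,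
      if_pos (Finset.mem_range.mpr (Nat.mod_lt n ha))]
    simp
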